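/- arXiv:1512.08537 — 5 statements merged into one kernel-verified Lean document; each statement's English description precedes it below -/
import Mathlib

section
/- Let k ≥ 0 and let g : ℂ × ℂ × ℝ^k → ℝ be continuously differentiable. For ε ∈ ℝ define φ_ε(z₀, z₁, x) = g(z₀, z₁, x) − log|z₀z₁ + ε|² on the open set {(z₀, z₁, x) : z₀z₁ + ε ≠ 0}. Suppose ε_m → 0 with ε_m ≠ 0, and (z₀^m, z₁^m, x^m) is a sequence with z₀^m z₁^m + ε_m ≠ 0 at which the Fréchet derivative of φ_{ε_m} vanishes, and (z₀^m, z₁^m, x^m) → (0, 0, x₀). Then the Fréchet derivative of the function x ↦ g(0, 0, x) vanishes at x₀. -/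
open Filter Topology

/-! The term `log |z₀z₁ + ε|²` does not depend on `x`, so at every critical point of `φ_ε` the
`x`-part of the derivative of `g` vanishes exactly. Since `g` is `C¹`, the
vanishing of that partial derivative is a closed condition and passes to the limit `(0, 0, x₀)`,
where it is the derivative of `x ↦ g(0, 0, x)`. -/

section

variable {𝕜 : Type*} [NontriviallyNormedField 𝕜]
  {E F G V : Type*} [NormedAddCommGroup E] [NormedSpace 𝕜 E] [NormedAddCommGroup F]
  [NormedSpace 𝕜 F] [NormedAddCommGroup G] [NormedSpace 𝕜 G] [NormedAddCommGroup V]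
  [NormedSpace 𝕜 V]

theorem fderiv_comp_clm_comp_eq_zero {H : F → G} {π : E →L[𝕜] F} {L : V →L[𝕜] E} {p : E}
    (hH : DifferentiableAt 𝕜 H (π p)) (hπL : π.comp L = 0) :
    (fderiv 𝕜 (fun q => H (π q)) p).comp L = 0 := by
  rw [show (fun q => H (π q)) = H ∘ π from rfl, fderiv_comp p hH π.differentiableAt, π.fderiv,
    ContinuousLinearMap.comp_assoc, hπL, ContinuousLinearMap.comp_zero]

theorem fderiv_comp_eq_zero_of_fderiv_sub_comp_clm_eq_zero {f : E → G} {H : F → G}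
    {π : E →L[𝕜] F} {L : V →L[𝕜] E} {p : E} (hf : DifferentiableAt 𝕜 f p)
    (hH : DifferentiableAt 𝕜 H (π p)) (hπL : π.comp L = 0)
    (hcrit : fderiv 𝕜 (fun q => f q - H (π q)) p = 0) :
    (fderiv 𝕜 f p).comp L = 0 := by
  have hHπ : DifferentiableAt 𝕜 (fun q => H (π q)) p := hH.comp p π.differentiableAt
  rw [fderiv_fun_sub hf hHπ, sub_eq_zero] at hcrit
  rw [hcrit, fderiv_comp_clm_comp_eq_zero hH hπL]

theorem isClosed_setOf_fderiv_comp_eq_zero {f : E → G} (hf : ContDiff 𝕜 1 f) (L : V →L[𝕜] E) :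
    IsClosed {p | (fderiv 𝕜 f p).comp L = 0} :=
  isClosed_eq ((hf.continuous_fderiv one_ne_zero).clm_comp continuous_const) continuous_const

theorem fderiv_prodMk_left_eq_comp_inr {f : E × F → G} {a : E} {y : F}
    (hf : DifferentiableAt 𝕜 f (a, y)) :
    fderiv 𝕜 (fun y => f (a, y)) y = (fderiv 𝕜 f (a, y)).comp (.inr 𝕜 E F) :=
  (hf.hasFDerivAt.comp y (hasFDerivAt_prodMk_right a y)).fderiv

end

theorem DifferentiableAt.log_normSq {G : Type*} [NormedAddCommGroup G] [NormedSpace ℝ G]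
    {f : G → ℂ} {x : G} (hf : DifferentiableAt ℝ f x) (hx : f x ≠ 0) :
    DifferentiableAt ℝ (fun y => Real.log (Complex.normSq (f y))) x := by
  simp_rw [Complex.normSq_eq_norm_sq]
  exact (hf.norm_sq ℝ).log (by positivity)

theorem limit_of_critical_points_is_critical_on_singular_set_general
    (k : ℕ) (g : ℂ × ℂ × EuclideanSpace ℝ (Fin k) → ℝ) (hg : ContDiff ℝ 1 g)
    (x₀ : EuclideanSpace ℝ (Fin k))
    (ε : ℕ → ℝ) (z₀ z₁ : ℕ → ℂ) (x : ℕ → EuclideanSpace ℝ (Fin k))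
    (hne : ∀ m, z₀ m * z₁ m + (ε m : ℂ) ≠ 0)
    (hcrit : ∀ m, fderiv ℝ
        (fun p : ℂ × ℂ × EuclideanSpace ℝ (Fin k) =>
          g p - Real.log (Complex.normSq (p.1 * p.2.1 + (ε m : ℂ))))
        (z₀ m, z₁ m, x m) = 0)
    (hlim : Tendsto (fun m => ((z₀ m, z₁ m, x m) : ℂ × ℂ × EuclideanSpace ℝ (Fin k)))
        atTop (𝓝 ((0 : ℂ), (0 : ℂ), x₀))) :
    fderiv ℝ (fun y : EuclideanSpace ℝ (Fin k) => g ((0 : ℂ), (0 : ℂ), y)) x₀ = 0 := by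
  let L := (ContinuousLinearMap.inr ℝ ℂ (ℂ × EuclideanSpace ℝ (Fin k))).comp
    (.inr ℝ ℂ (EuclideanSpace ℝ (Fin k)))
  let π := (ContinuousLinearMap.id ℝ ℂ).prodMap (.fst ℝ ℂ (EuclideanSpace ℝ (Fin k)))
  have hπL : π.comp L = 0 := by ext <;> simp [π, L]
  have hg' : Differentiable ℝ g := hg.differentiable one_ne_zero
  have hcritL (m : ℕ) : (fderiv ℝ g (z₀ m, z₁ m, x m)).comp L = 0 := by
    have hH : DifferentiableAt ℝ (fun q : ℂ × ℂ => Real.log (Complex.normSq (q.1 * q.2 + ε m)))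
        (π (z₀ m, z₁ m, x m)) :=
      ((differentiableAt_fst.mul differentiableAt_snd).add_const _).log_normSq (hne m)
    exact fderiv_comp_eq_zero_of_fderiv_sub_comp_clm_eq_zero (hg' _) hH hπL (hcrit m)
  have hslice : fderiv ℝ (fun y => g (0, 0, y)) x₀ = (fderiv ℝ g (0, 0, x₀)).comp L := by
    have hg0 : DifferentiableAt ℝ (fun w : ℂ × EuclideanSpace ℝ (Fin k) => g (0, w)) (0, x₀) :=
      hg'.differentiableAt.comp _ ((differentiableAt_const _).prodMk differentiableAt_id)
    rw [fderiv_prodMk_left_eq_comp_inr hg0, fderiv_prodMk_left_eq_comp_inr (hg' _),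
      ContinuousLinearMap.comp_assoc]
  rw [hslice]
  exact (isClosed_setOf_fderiv_comp_eq_zero hg L).mem_of_tendsto hlim (.of_forall hcritL)

/-- A limit point on the singular set `{z₀ = z₁ = 0}` of critical points of
`φ_{ε_m} = g - log|z₀z₁ + ε_m|²` is a critical point of `x ↦ g(0,0,x)`. -/
theorem limit_of_critical_points_is_critical_on_singular_set
    (k : ℕ) (g : ℂ × ℂ × EuclideanSpace ℝ (Fin k) → ℝ) (hg : ContDiff ℝ 1 g)
    (x₀ : EuclideanSpace ℝ (Fin k))
    (ε : ℕ → ℝ) (z₀ z₁ : ℕ → ℂ) (x : ℕ → EuclideanSpace ℝ (Fin k))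
    (hε : Tendsto ε atTop (𝓝 0)) (hε' : ∀ m, ε m ≠ 0)
    (hne : ∀ m, z₀ m * z₁ m + (ε m : ℂ) ≠ 0)
    (hcrit : ∀ m, fderiv ℝ
        (fun p : ℂ × ℂ × EuclideanSpace ℝ (Fin k) =>
          g p - Real.log (Complex.normSq (p.1 * p.2.1 + (ε m : ℂ))))
        (z₀ m, z₁ m, x m) = 0)
    (hlim : Tendsto (fun m => ((z₀ m, z₁ m, x m) : ℂ × ℂ × EuclideanSpace ℝ (Fin k)))
        atTop (𝓝 ((0 : ℂ), (0 : ℂ), x₀))) :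
    fderiv ℝ (fun y : EuclideanSpace ℝ (Fin k) => g ((0 : ℂ), (0 : ℂ), y)) x₀ = 0 :=
  limit_of_critical_points_is_critical_on_singular_set_general k g hg x₀ ε z₀ z₁ x hne hcrit hlim
end

section
/- Let k ≥ 0 and let g : ℂ³ × ℝ^k → ℝ be continuously differentiable. For ε ∈ ℝ define φ_ε(z₀, z₁, z₂, x) = g(z₀, z₁, z₂, x) − log|z₀z₁ + εz₂|² on the open set where z₀z₁ + εz₂ ≠ 0. Fix x₀ ∈ ℝ^k. Then there is no sequence (ε_m, p_m) with ε_m → 0, ε_m ≠ 0, p_m = (z₀^m, z₁^m, z₂^m, x^m) → (0, 0, 0, x₀), z₀^m z₁^m + ε_m z₂^m ≠ 0 for every m, and the Fréchet derivative of φ_{ε_m} vanishing at p_m for every m. -/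
/-!
At a critical point of `g - log ‖s‖²` the differential of `g` equals `2⟪s, ds⟫ / ‖s‖²`. For
`s = z₀z₁ + εz₂`, testing this against the directions of `z₁` and `z₂` and their multiples by `i`
gives `‖z₀‖ ≤ C ‖s‖` and `‖ε‖ ≤ C ‖s‖` with `C = ‖dg‖`. Feeding these into
`‖s‖ ≤ ‖z₀‖ ‖z₁‖ + ‖ε‖ ‖z₂‖` yields `1 ≤ C (‖z₁‖ + ‖z₂‖)`, which fails near `z₁ = z₂ = 0` since
`dg` is continuous, whatever `ε` is.
-/

open Filter Topology Real
open scoped InnerProductSpace ComplexConjugate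

-- `⟪w, a⟫` and `⟪w, I * a⟫` are the real part and minus the imaginary part of `a * conj w`.
theorem Complex.norm_mul_norm_le_abs_inner_add_abs_inner_I_mul (w a : ℂ) :
    ‖w‖ * ‖a‖ ≤ |⟪w, a⟫_ℝ| + |⟪w, Complex.I * a⟫_ℝ| := by
  have h := Complex.norm_le_abs_re_add_abs_im (a * conj w)
  simp only [norm_mul, Complex.norm_conj] at h
  simp only [Complex.inner, mul_assoc, Complex.mul_re Complex.I, Complex.I_re, Complex.I_im,
    zero_mul, one_mul, zero_sub, abs_neg]
  linarith

section

variable {E F : Type*} [NormedAddCommGroup E] [NormedSpace ℝ E]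
  [NormedAddCommGroup F] [InnerProductSpace ℝ F]

theorem two_mul_abs_inner_le_of_fderiv_sub_log_norm_sq_eq_zero {g : E → ℝ} {s : E → F}
    {L : E →L[ℝ] F} {p : E} (hg : DifferentiableAt ℝ g p) (hs : HasFDerivAt s L p)
    (hsp : s p ≠ 0) (hcrit : fderiv ℝ (fun q => g q - log (‖s q‖ ^ 2)) p = 0) (v : E) :
    2 * |⟪s p, L v⟫_ℝ| ≤ ‖fderiv ℝ g p‖ * ‖v‖ * ‖s p‖ ^ 2 := by
  have hsp' : 0 < ‖s p‖ ^ 2 := by positivity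
  have hφ : HasFDerivAt (fun q => g q - log (‖s q‖ ^ 2))
      (fderiv ℝ g p - (‖s p‖ ^ 2)⁻¹ • (2 • (innerSL ℝ (s p)).comp L)) p :=
    hg.hasFDerivAt.sub (hs.norm_sq.log hsp'.ne')
  rw [hφ.fderiv, sub_eq_zero] at hcrit
  calc 2 * |⟪s p, L v⟫_ℝ| = ‖s p‖ ^ 2 * ‖fderiv ℝ g p v‖ := by
        rw [hcrit]; simp [field]
    _ ≤ ‖s p‖ ^ 2 * (‖fderiv ℝ g p‖ * ‖v‖) := by gcongr; exact (fderiv ℝ g p).le_opNorm v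
    _ = ‖fderiv ℝ g p‖ * ‖v‖ * ‖s p‖ ^ 2 := by ring

theorem norm_le_of_fderiv_sub_log_norm_sq_eq_zero {g : E → ℝ} {s : E → ℂ}
    {L : E →L[ℝ] ℂ} {p : E} (hg : DifferentiableAt ℝ g p) (hs : HasFDerivAt s L p)
    (hsp : s p ≠ 0) (hcrit : fderiv ℝ (fun q => g q - log (‖s q‖ ^ 2)) p = 0) (v v' : E)
    (hv : ‖v‖ ≤ 1) (hv' : ‖v'‖ ≤ 1) (hLv' : L v' = Complex.I * L v) :
    ‖L v‖ ≤ ‖fderiv ℝ g p‖ * ‖s p‖ := by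
  have bound {u : E} (hu : ‖u‖ ≤ 1) : 2 * |⟪s p, L u⟫_ℝ| ≤ ‖fderiv ℝ g p‖ * ‖s p‖ ^ 2 :=
    (two_mul_abs_inner_le_of_fderiv_sub_log_norm_sq_eq_zero hg hs hsp hcrit u).trans
      (by gcongr; exact mul_le_of_le_one_right (norm_nonneg _) hu)
  have h := Complex.norm_mul_norm_le_abs_inner_add_abs_inner_I_mul (s p) (L v)
  rw [← hLv'] at h
  have hre := bound hv
  have him := bound hv'
  have hpos : 0 < ‖s p‖ := norm_pos_iff.2 hsp
  nlinarith

end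

section

variable {X : Type*} [NormedAddCommGroup X] [NormedSpace ℝ X]

theorem norm_le_of_fderiv_sub_log_normSq_pencil_eq_zero {g : ℂ × ℂ × ℂ × X → ℝ}
    {ε z₀ z₁ z₂ : ℂ} {x : X}
    (hg : DifferentiableAt ℝ g (z₀, z₁, z₂, x)) (hs : z₀ * z₁ + ε * z₂ ≠ 0)
    (hcrit : fderiv ℝ (fun p : ℂ × ℂ × ℂ × X =>
      g p - log (Complex.normSq (p.1 * p.2.1 + ε * p.2.2.1))) (z₀, z₁, z₂, x) = 0) :
    ‖z₀‖ ≤ ‖fderiv ℝ g (z₀, z₁, z₂, x)‖ * ‖z₀ * z₁ + ε * z₂‖ ∧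
      ‖ε‖ ≤ ‖fderiv ℝ g (z₀, z₁, z₂, x)‖ * ‖z₀ * z₁ + ε * z₂‖ := by
  have hid := hasFDerivAt_id (𝕜 := ℝ) (z₀, z₁, z₂, x)
  have hds :
      HasFDerivAt (fun p : ℂ × ℂ × ℂ × X => p.1 * p.2.1 + ε * p.2.2.1) _ (z₀, z₁, z₂, x) :=
    (hid.fst.mul hid.snd.fst).add (hid.snd.snd.fst.const_mul ε)
  simp only [Complex.normSq_eq_norm_sq] at hcrit
  have key := norm_le_of_fderiv_sub_log_norm_sq_eq_zero hg hds hs hcrit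
  constructor
  · simpa using key (0, 1, 0, 0) (0, Complex.I, 0, 0) (by simp) (by simp) (by simp [mul_comm])
  · simpa using key (0, 0, 1, 0) (0, 0, Complex.I, 0) (by simp) (by simp) (by simp [mul_comm])

theorem one_le_norm_fderiv_mul_of_fderiv_sub_log_normSq_pencil_eq_zero {g : ℂ × ℂ × ℂ × X → ℝ}
    {ε z₀ z₁ z₂ : ℂ} {x : X}
    (hg : DifferentiableAt ℝ g (z₀, z₁, z₂, x)) (hs : z₀ * z₁ + ε * z₂ ≠ 0)
    (hcrit : fderiv ℝ (fun p : ℂ × ℂ × ℂ × X =>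
      g p - log (Complex.normSq (p.1 * p.2.1 + ε * p.2.2.1))) (z₀, z₁, z₂, x) = 0) :
    1 ≤ ‖fderiv ℝ g (z₀, z₁, z₂, x)‖ * (‖z₁‖ + ‖z₂‖) := by
  obtain ⟨hz₀, hε⟩ := norm_le_of_fderiv_sub_log_normSq_pencil_eq_zero hg hs hcrit
  set C := ‖fderiv ℝ g (z₀, z₁, z₂, x)‖
  set W := ‖z₀ * z₁ + ε * z₂‖
  refine (le_mul_iff_one_le_right (norm_pos_iff.2 hs)).1 ?_
  calc W ≤ ‖z₀‖ * ‖z₁‖ + ‖ε‖ * ‖z₂‖ := by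
        simpa only [norm_mul] using norm_add_le (z₀ * z₁) (ε * z₂)
    _ ≤ C * W * ‖z₁‖ + C * W * ‖z₂‖ := by gcongr
    _ = W * (C * (‖z₁‖ + ‖z₂‖)) := by ring

end

/-- Critical points of `φ_ε = g - log|z₀z₁ + εz₂|²` cannot wander off to
the base locus (the point `(0,0,0,x₀)`) as `ε → 0`. -/
theorem no_critical_points_near_base_locus
    (k : ℕ) (g : ℂ × ℂ × ℂ × EuclideanSpace ℝ (Fin k) → ℝ) (hg : ContDiff ℝ 1 g)
    (x₀ : EuclideanSpace ℝ (Fin k)) :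
    ¬ ∃ (ε : ℕ → ℝ) (z₀ z₁ z₂ : ℕ → ℂ) (x : ℕ → EuclideanSpace ℝ (Fin k)),
        Tendsto ε atTop (𝓝 0) ∧ (∀ m, ε m ≠ 0) ∧
        Tendsto (fun m => ((z₀ m, z₁ m, z₂ m, x m) : ℂ × ℂ × ℂ × EuclideanSpace ℝ (Fin k)))
          atTop (𝓝 ((0 : ℂ), (0 : ℂ), (0 : ℂ), x₀)) ∧
        (∀ m, z₀ m * z₁ m + (ε m : ℂ) * z₂ m ≠ 0) ∧
        (∀ m, fderiv ℝ
            (fun p : ℂ × ℂ × ℂ × EuclideanSpace ℝ (Fin k) =>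
              g p - Real.log (Complex.normSq (p.1 * p.2.1 + (ε m : ℂ) * p.2.2.1)))
            (z₀ m, z₁ m, z₂ m, x m) = 0) := by
  rintro ⟨ε, z₀, z₁, z₂, x, -, -, hp, hs, hcrit⟩
  have hlim : Tendsto (fun m => ‖fderiv ℝ g (z₀ m, z₁ m, z₂ m, x m)‖ * (‖z₁ m‖ + ‖z₂ m‖))
      atTop (𝓝 0) := by
    have hDg := ((hg.continuous_fderiv one_ne_zero).tendsto _).comp hp
    have hz := ((by fun_prop : Continuous fun p : ℂ × ℂ × ℂ × EuclideanSpace ℝ (Fin k) =>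
      ‖p.2.1‖ + ‖p.2.2.1‖).tendsto _).comp hp
    simpa using hDg.norm.mul hz
  obtain ⟨m, hm⟩ := (hlim.eventually (gt_mem_nhds one_pos)).exists
  exact hm.not_ge (one_le_norm_fderiv_mul_of_fderiv_sub_log_normSq_pencil_eq_zero
    (hg.differentiable one_ne_zero _) (hs m) (hcrit m))
end

section
/- Let N ≥ 1 and let A, B be real symmetric N × N matrices. Let K = ker A, let q be the maximal dimension of a subspace of ℝ^N on which the quadratic form x ↦ xᵀAx is negative definite, and let q' be the maximal dimension of a subspace of K on which x ↦ xᵀBx is negative definite. Assume the bilinear form (x, y) ↦ xᵀBy restricted to K is nondegenerate (i.e., for every nonzero x ∈ K there exists y ∈ K with xᵀBy ≠ 0). Then there exists ε₁ > 0 such that for every ε with 0 < ε < ε₁, the matrix (1/ε)·A + B is invertible, and the maximal dimension of a subspace of ℝ^N on which the quadratic form x ↦ xᵀ((1/ε)A + B)x is negative definite equals q + q'. -/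
/-!
Put `t = 1 / ε`, so that `(1 / ε) • A + B` is the form `t • α + β`. Let `W_A` be a maximal
negative definite subspace for `α` and `W_B ⊆ ker α` one for `β`. On `W_A ⊕ W_B` the form `α` is
nonpositive and vanishes only on `W_B`, where `β < 0`; by compactness of the unit sphere,
`t • α + β` is negative definite there for all large `t`. Symmetrically, a Sylvester-type
argument gives `P_A`, positive definite for `α`, of dimension at least `N - q - dim ker α`, and
`P_B ⊆ ker α`, positive definite for `β`, of dimension at least `dim ker α - q'` (this is where
the nondegeneracy of `β` on `ker α` enters); `t • α + β` is positive definite on `P_A ⊕ P_B` for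
large `t`. A negative and a positive definite subspace of complementary dimensions force the
form to be nondegenerate with index exactly `q + q'`.
-/

open Matrix Module Filter

theorem Submodule.finrank_sup_eq_add_of_disjoint {K V : Type*} [DivisionRing K] [AddCommGroup V]
    [Module K V] {s t : Submodule K V} [FiniteDimensional K s] [FiniteDimensional K t]
    (h : Disjoint s t) : finrank K ↥(s ⊔ t) = finrank K s + finrank K t := by
  rw [← Submodule.finrank_sup_add_finrank_inf_eq, h.eq_bot, finrank_bot, add_zero]

theorem Submodule.finrank_le_finrank_inf_add_finrank_of_isCompl {K V : Type*} [DivisionRing K]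
    [AddCommGroup V] [Module K V] [FiniteDimensional K V] {R C : Submodule K V} (hRC : IsCompl R C)
    (U : Submodule K V) : finrank K U ≤ finrank K ↥(U ⊓ C) + finrank K R := by
  have := Submodule.finrank_sup_add_finrank_inf_eq U C
  have := Submodule.finrank_le (U ⊔ C)
  have := Submodule.finrank_add_eq_of_isCompl hRC
  omega

theorem IsCompact.eventually_forall_mul_add_neg {X : Type*} [TopologicalSpace X]
    {S : Set X} (hS : IsCompact S) {f g : X → ℝ} (hf : Continuous f) (hg : Continuous g)
    (hf₀ : ∀ x ∈ S, f x ≤ 0) (hg₀ : ∀ x ∈ S, f x = 0 → g x < 0) :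
    ∀ᶠ t in atTop, ∀ x ∈ S, t * f x + g x < 0 := by
  -- the open sets `U n` increase with `n` and cover `S`, so one of them already contains `S`
  set U : ℕ → Set X := fun n ↦ {x | (n : ℝ) * f x + g x < 0} ∪ {x | 0 < f x}
  have hU : ∀ n, IsOpen (U n) := fun n ↦
    (isOpen_lt (by fun_prop) continuous_const).union (isOpen_lt continuous_const hf)
  have hmono : Monotone U := by
    intro m n hmn x hx
    simp only [U, Set.mem_union, Set.mem_ofPred_eq] at hx ⊢
    have : (m : ℝ) ≤ n := by exact_mod_cast hmn
    rcases le_or_gt (f x) 0 with hfx | hfx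
    · exact Or.inl (by nlinarith [hx.resolve_right hfx.not_gt])
    · exact Or.inr hfx
  have hcover : S ⊆ ⋃ n, U n := by
    intro x hx
    simp only [U, Set.mem_iUnion, Set.mem_union, Set.mem_ofPred_eq]
    rcases (hf₀ x hx).lt_or_eq with hfx | hfx
    · obtain ⟨n, hn⟩ := exists_nat_gt (g x / -f x)
      have := (div_lt_iff₀ (neg_pos.mpr hfx)).mp hn
      exact ⟨n, Or.inl (by linarith)⟩
    · exact ⟨0, Or.inl (by simpa [hfx] using hg₀ x hx hfx)⟩
  obtain ⟨n, hn⟩ := hS.elim_directed_cover U hU hcover hmono.directed_le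
  filter_upwards [eventually_ge_atTop (n : ℝ)] with t ht x hx
  have hnx : (n : ℝ) * f x + g x < 0 := (hn hx).resolve_right (hf₀ x hx).not_gt
  nlinarith [hf₀ x hx]

namespace LinearMap.BilinForm

section Algebraic

variable {𝕜 E : Type*} [Field 𝕜] [AddCommGroup E] [Module 𝕜 E]
  {β : LinearMap.BilinForm 𝕜 E} {V W : Submodule 𝕜 E}

theorem apply_add_self_of_mem_ker (hβ : β.IsSymm) (x : E) {y : E}
    (hy : y ∈ LinearMap.ker β) : β (x + y) (x + y) = β x x := by
  rw [LinearMap.mem_ker] at hy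
  simp [hy, hβ.eq x y]

theorem finrank_le_finrank_add_finrank_inf_orthogonal [FiniteDimensional 𝕜 E]
    (β : LinearMap.BilinForm 𝕜 E) (V W : Submodule 𝕜 E) :
    finrank 𝕜 V ≤ finrank 𝕜 W + finrank 𝕜 ↥(V ⊓ β.orthogonal W) := by
  have := finrank_add_finrank_orthogonal' (B := β) W
  have := Submodule.finrank_sup_add_finrank_inf_eq V (β.orthogonal W)
  have := Submodule.finrank_le (V ⊔ β.orthogonal W)
  omega

variable [LinearOrder 𝕜]

def IsNegDefOn (β : LinearMap.BilinForm 𝕜 E) (W : Submodule 𝕜 E) : Prop :=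
  ∀ x ∈ W, x ≠ 0 → β x x < 0

def IsPosDefOn (β : LinearMap.BilinForm 𝕜 E) (W : Submodule 𝕜 E) : Prop :=
  ∀ x ∈ W, x ≠ 0 → 0 < β x x

def negDefFinranks (β : LinearMap.BilinForm 𝕜 E) (V : Submodule 𝕜 E) : Set ℕ :=
  {d | ∃ W ≤ V, finrank 𝕜 W = d ∧ IsNegDefOn β W}

theorem IsNegDefOn.apply_self_nonpos (h : IsNegDefOn β W) {x : E} (hx : x ∈ W) :
    β x x ≤ 0 := by
  rcases eq_or_ne x 0 with rfl | hx0
  · simp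
  · exact (h x hx hx0).le

theorem IsPosDefOn.apply_self_nonneg (h : IsPosDefOn β W) {x : E} (hx : x ∈ W) :
    0 ≤ β x x := by
  rcases eq_or_ne x 0 with rfl | hx0
  · simp
  · exact (h x hx hx0).le

theorem IsNegDefOn.disjoint (hW : IsNegDefOn β W) (hV : ∀ x ∈ V, 0 ≤ β x x) :
    Disjoint W V :=
  Submodule.disjoint_def.mpr fun x hxW hxV ↦
    by_contra fun hx0 ↦ (hV x hxV).not_gt (hW x hxW hx0)

theorem IsNegDefOn.disjoint_orthogonal (hW : IsNegDefOn β W) : Disjoint W (β.orthogonal W) :=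
  Submodule.disjoint_def.mpr fun x hxW hxW' ↦
    by_contra fun hx0 ↦ (hW x hxW hx0).ne (hxW' x hxW)

theorem IsNegDefOn.finrank_add_finrank_le [FiniteDimensional 𝕜 E] {P : Submodule 𝕜 E}
    (hW : IsNegDefOn β W) (hP : IsPosDefOn β P) : finrank 𝕜 W + finrank 𝕜 P ≤ finrank 𝕜 E :=
  Submodule.finrank_add_finrank_le_of_disjoint (hW.disjoint fun _ ↦ hP.apply_self_nonneg)

theorem isGreatest_negDefFinranks [FiniteDimensional 𝕜 E] {P : Submodule 𝕜 E}
    (hW : IsNegDefOn β W) (hP : IsPosDefOn β P) (hdim : finrank 𝕜 E ≤ finrank 𝕜 W + finrank 𝕜 P) :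
    IsGreatest (negDefFinranks β ⊤) (finrank 𝕜 W) := by
  refine ⟨⟨W, le_top, rfl, hW⟩, ?_⟩
  rintro _ ⟨W', -, rfl, hW'⟩
  have := hW'.finrank_add_finrank_le hP
  omega

variable [IsStrictOrderedRing 𝕜]

theorem isNegDefOn_neg_iff : IsNegDefOn (-β) W ↔ IsPosDefOn β W := by
  simp only [IsNegDefOn, IsPosDefOn, neg_apply, Left.neg_neg_iff]

theorem isNegDefOn_span_singleton {x : E} (hx : β x x < 0) : IsNegDefOn β (𝕜 ∙ x) := by
  rintro _ hy hy0
  obtain ⟨c, rfl⟩ := Submodule.mem_span_singleton.mp hy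
  have hc : c ≠ 0 := by rintro rfl; simp at hy0
  simp only [map_smul, LinearMap.smul_apply, smul_eq_mul]
  nlinarith [mul_self_pos.mpr hc]

theorem IsNegDefOn.sup_of_le_orthogonal (hβ : β.IsSymm) (hW : IsNegDefOn β W)
    (hV : IsNegDefOn β V) (hVW : V ≤ β.orthogonal W) : IsNegDefOn β (W ⊔ V) := by
  intro z hz hz0
  obtain ⟨w, hw, v, hv, rfl⟩ := Submodule.mem_sup.mp hz
  have hwv : β w v = 0 := hVW hv w hw
  have hsplit : β (w + v) (w + v) = β w w + β v v := by
    simp [hwv, hβ.eq v w]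
  rw [hsplit]
  rcases eq_or_ne w 0 with rfl | hw0
  · simpa using hV v hv (by simpa using hz0)
  · linarith [hW w hw hw0, hV.apply_self_nonpos hv]

theorem apply_eq_zero_of_apply_self_eq_zero (hβ : β.IsSymm) (hV : ∀ x ∈ V, 0 ≤ β x x)
    {x y : E} (hx : x ∈ V) (hxx : β x x = 0) (hy : y ∈ V) : β x y = 0 := by
  have hquad : ∀ t : 𝕜, 0 ≤ β y y * (t * t) + 2 * β x y * t + 0 := fun t ↦ by
    have h := hV (x + t • y) (V.add_mem hx (V.smul_mem t hy))
    simp only [map_add, map_smul, LinearMap.add_apply, LinearMap.smul_apply, smul_eq_mul,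
      hxx, hβ.eq y x] at h
    linarith
  have := discrim_le_zero hquad
  rw [discrim] at this
  nlinarith [sq_nonneg (β x y)]

variable [FiniteDimensional 𝕜 E]

theorem apply_self_nonneg_of_mem_inf_orthogonal (hβ : β.IsSymm) (hWV : W ≤ V)
    (hW : IsNegDefOn β W)
    (hmax : finrank 𝕜 W ∈ upperBounds (negDefFinranks β V)) :
    ∀ x ∈ V ⊓ β.orthogonal W, 0 ≤ β x x := by
  rintro x ⟨hxV, hxW⟩
  by_contra! hneg
  have hx : x ∉ W := fun h ↦ by
    obtain rfl := Submodule.disjoint_def.mp hW.disjoint_orthogonal x h hxW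
    simp at hneg
  have := hmax ⟨W ⊔ 𝕜 ∙ x, sup_le hWV ((Submodule.span_singleton_le_iff_mem _ _).mpr hxV), rfl,
    hW.sup_of_le_orthogonal hβ (isNegDefOn_span_singleton hneg)
      ((Submodule.span_singleton_le_iff_mem _ _).mpr hxW)⟩
  rw [Submodule.finrank_sup_span_singleton hx] at this
  omega

theorem exists_isPosDefOn_of_maximal (hβ : β.IsSymm) (hWV : W ≤ V) (hW : IsNegDefOn β W)
    (hmax : finrank 𝕜 W ∈ upperBounds (negDefFinranks β V)) :
    ∃ P ≤ V, IsPosDefOn β P ∧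
      finrank 𝕜 V ≤ finrank 𝕜 W + finrank 𝕜 ↥(V ⊓ β.orthogonal V) + finrank 𝕜 P := by
  -- `U` is positive semidefinite by maximality of `W`, and `V = W ⊕ U`; a complement of the
  -- radical of `V` cuts out of `U` a positive definite subspace
  set U := V ⊓ β.orthogonal W
  have hVWU : finrank 𝕜 V ≤ finrank 𝕜 W + finrank 𝕜 U :=
    finrank_le_finrank_add_finrank_inf_orthogonal β V W
  have hU : ∀ x ∈ U, 0 ≤ β x x := apply_self_nonneg_of_mem_inf_orthogonal hβ hWV hW hmax
  have hVU : V ≤ W ⊔ U := by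
    refine le_of_eq (Submodule.eq_of_le_of_finrank_le (sup_le hWV inf_le_left) ?_).symm
    rwa [Submodule.finrank_sup_eq_add_of_disjoint (hW.disjoint hU)]
  obtain ⟨C, hC⟩ := Submodule.exists_isCompl (V ⊓ β.orthogonal V)
  refine ⟨U ⊓ C, inf_le_left.trans inf_le_left, ?_, ?_⟩
  · rintro x ⟨hxU, hxC⟩ hx0
    refine (hU x hxU).lt_of_ne' fun hxx ↦ hx0 ?_
    have hxR : x ∈ V ⊓ β.orthogonal V := by
      refine ⟨hxU.1, fun v hv ↦ ?_⟩
      obtain ⟨w, hw, u, hu, rfl⟩ := Submodule.mem_sup.mp (hVU hv)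
      rw [map_add, LinearMap.add_apply, hxU.2 w hw, zero_add, hβ.eq]
      exact apply_eq_zero_of_apply_self_eq_zero hβ hU hxU hxx hu
    exact Submodule.disjoint_def.mp hC.disjoint x hxR hxC
  · have := Submodule.finrank_le_finrank_inf_add_finrank_of_isCompl hC U
    omega

theorem nondegenerate_of_isNegDefOn_of_isPosDefOn (hβ : β.IsSymm) {P : Submodule 𝕜 E}
    (hW : IsNegDefOn β W) (hP : IsPosDefOn β P)
    (hdim : finrank 𝕜 E ≤ finrank 𝕜 W + finrank 𝕜 P) : β.Nondegenerate := by
  -- `P ⊕ ker β` is positive semidefinite, hence meets `W` trivially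
  rw [nondegenerate_iff_ker_eq_bot, ← Submodule.finrank_eq_zero]
  have hPker : Disjoint P (LinearMap.ker β) :=
    (isNegDefOn_neg_iff.mpr hP).disjoint fun x hx ↦ by simp [LinearMap.mem_ker.mp hx]
  have hnonneg : ∀ x ∈ P ⊔ LinearMap.ker β, 0 ≤ β x x := by
    intro x hx
    obtain ⟨p, hp, k, hk, rfl⟩ := Submodule.mem_sup.mp hx
    rw [apply_add_self_of_mem_ker hβ p hk]
    exact hP.apply_self_nonneg hp
  have := Submodule.finrank_add_finrank_le_of_disjoint (hW.disjoint hnonneg)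
  rw [Submodule.finrank_sup_eq_add_of_disjoint hPker] at this
  omega

end Algebraic

section Perturbation

variable {E : Type*} [NormedAddCommGroup E] [NormedSpace ℝ E] [FiniteDimensional ℝ E]
  {α β : LinearMap.BilinForm ℝ E}

theorem continuous_apply_self (β : LinearMap.BilinForm ℝ E) : Continuous fun x ↦ β x x :=
  β.toContinuousBilinearMap.continuous₂.comp (continuous_id.prodMk continuous_id)

theorem eventually_isNegDefOn_smul_add {W : Submodule ℝ E} (hα : ∀ x ∈ W, α x x ≤ 0)
    (hβ : ∀ x ∈ W, x ≠ 0 → α x x = 0 → β x x < 0) :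
    ∀ᶠ t : ℝ in atTop, IsNegDefOn (t • α + β) W := by
  have hS : IsCompact ((W : Set E) ∩ Metric.sphere 0 1) :=
    (isCompact_sphere 0 1).inter_left W.closed_of_finiteDimensional
  filter_upwards [hS.eventually_forall_mul_add_neg (continuous_apply_self α)
    (continuous_apply_self β) (fun x hx ↦ hα x hx.1)
    (fun x hx ↦ hβ x hx.1 (ne_zero_of_mem_unit_sphere ⟨x, hx.2⟩))] with t ht x hx hx0
  have hx' : 0 < ‖x‖ := norm_pos_iff.mpr hx0
  set u := ‖x‖⁻¹ • x
  have hu : u ∈ (W : Set E) ∩ Metric.sphere 0 1 :=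
    ⟨W.smul_mem _ hx, by simp [u, norm_smul, hx'.ne']⟩
  have hxu : x = ‖x‖ • u := by simp [u, smul_smul, hx'.ne']
  have hscale : (t • α + β) x x = ‖x‖ ^ 2 * (t * α u u + β u u) := by
    conv_lhs => rw [hxu]
    simp only [map_smul, LinearMap.smul_apply, LinearMap.add_apply, smul_eq_mul]
    ring
  rw [hscale]
  exact mul_neg_of_pos_of_neg (by positivity) (ht u hu)

theorem eventually_isNegDefOn_smul_add_sup (hα : α.IsSymm) {W₁ W₂ : Submodule ℝ E}
    (h₁ : IsNegDefOn α W₁) (h₂ : IsNegDefOn β W₂) (hker : W₂ ≤ LinearMap.ker α) :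
    ∀ᶠ t : ℝ in atTop, IsNegDefOn (t • α + β) (W₁ ⊔ W₂) := by
  refine eventually_isNegDefOn_smul_add (fun x hx ↦ ?_) (fun x hx hx0 hαx ↦ ?_)
  all_goals obtain ⟨a, ha, b, hb, rfl⟩ := Submodule.mem_sup.mp hx
  · rw [apply_add_self_of_mem_ker hα a (hker hb)]
    exact h₁.apply_self_nonpos ha
  · rw [apply_add_self_of_mem_ker hα a (hker hb)] at hαx
    obtain rfl : a = 0 := by_contra fun ha0 ↦ (h₁ a ha ha0).ne hαx
    rw [zero_add] at hx0 ⊢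
    exact h₂ b hb hx0

theorem eventually_nondegenerate_and_isGreatest_negDefFinranks (hα : α.IsSymm)
    (hβ : β.IsSymm) {q q' : ℕ} (hq : IsGreatest (negDefFinranks α ⊤) q)
    (hq' : IsGreatest (negDefFinranks β (LinearMap.ker α)) q')
    (hnd : LinearMap.ker α ⊓ β.orthogonal (LinearMap.ker α) = ⊥) :
    ∀ᶠ t : ℝ in atTop, (t • α + β).Nondegenerate ∧
      IsGreatest (negDefFinranks (t • α + β) ⊤) (q + q') := by
  obtain ⟨WA, -, rfl, hWA⟩ := hq.1
  obtain ⟨WB, hWBK, rfl, hWB⟩ := hq'.1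
  obtain ⟨PA, -, hPA, hdimA⟩ := exists_isPosDefOn_of_maximal hα le_top hWA hq.2
  obtain ⟨PB, hPBK, hPB, hdimB⟩ := exists_isPosDefOn_of_maximal hβ hWBK hWB hq'.2
  rw [top_inf_eq, orthogonal_top_eq_ker hα.isRefl, finrank_top] at hdimA
  rw [hnd, finrank_bot, add_zero] at hdimB
  have hdisjW : Disjoint WA WB :=
    hWA.disjoint fun x hx ↦ by simp [LinearMap.mem_ker.mp (hWBK hx)]
  have hdisjP : Disjoint PA PB :=
    (isNegDefOn_neg_iff.mpr hPA).disjoint fun x hx ↦ by simp [LinearMap.mem_ker.mp (hPBK hx)]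
  have hdim : finrank ℝ E ≤ finrank ℝ ↥(WA ⊔ WB) + finrank ℝ ↥(PA ⊔ PB) := by
    rw [Submodule.finrank_sup_eq_add_of_disjoint hdisjW,
      Submodule.finrank_sup_eq_add_of_disjoint hdisjP]
    omega
  filter_upwards [eventually_isNegDefOn_smul_add_sup hα hWA hWB hWBK,
    eventually_isNegDefOn_smul_add_sup hα.neg (isNegDefOn_neg_iff.mpr hPA)
      (isNegDefOn_neg_iff.mpr hPB) (by simpa using hPBK)] with t hWt hPt
  rw [show t • -α + -β = -(t • α + β) by module, isNegDefOn_neg_iff] at hPt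
  rw [← Submodule.finrank_sup_eq_add_of_disjoint hdisjW]
  exact ⟨nondegenerate_of_isNegDefOn_of_isPosDefOn ((hα.smul t).add hβ) hWt hPt hdim,
    isGreatest_negDefFinranks hWt hPt hdim⟩

end Perturbation

end LinearMap.BilinForm

namespace Matrix

open LinearMap.BilinForm

variable {n 𝕜 : Type*} [Fintype n] [DecidableEq n] [Field 𝕜] [LinearOrder 𝕜]

theorem negDefFinranks_toBilin' (M : Matrix n n 𝕜) (V : Submodule 𝕜 (n → 𝕜)) :
    negDefFinranks (toBilin' M) V =
      {d | ∃ W ≤ V, finrank 𝕜 W = d ∧ ∀ x ∈ W, x ≠ 0 → x ⬝ᵥ M *ᵥ x < 0} := by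
  simp only [negDefFinranks, IsNegDefOn, toBilin'_apply']

theorem ker_toBilin'_of_isSymm [IsStrictOrderedRing 𝕜] {M : Matrix n n 𝕜} (hM : M.IsSymm) :
    LinearMap.ker (toBilin' M) = LinearMap.ker M.mulVecLin := by
  have hvec : ∀ x, x ᵥ* M = M *ᵥ x := fun x ↦ by rw [← mulVec_transpose, hM.eq]
  ext x
  simp only [LinearMap.mem_ker, mulVecLin_apply]
  constructor
  · intro h
    have := LinearMap.congr_fun h (M *ᵥ x)
    rw [toBilin'_apply', LinearMap.zero_apply, dotProduct_mulVec, hvec] at this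
    exact dotProduct_self_eq_zero.mp this
  · intro h
    refine LinearMap.ext fun y ↦ ?_
    rw [toBilin'_apply', LinearMap.zero_apply, dotProduct_mulVec, hvec, h, zero_dotProduct]

end Matrix

open LinearMap.BilinForm in
theorem index_of_perturbed_quadratic_form_general
    (N : ℕ) (A B : Matrix (Fin N) (Fin N) ℝ)
    (hA : A.IsSymm) (hB : B.IsSymm)
    (K : Submodule ℝ (Fin N → ℝ)) (hK : K = LinearMap.ker A.mulVecLin)
    (q q' : ℕ)
    (hq : IsGreatest {d : ℕ | ∃ W : Submodule ℝ (Fin N → ℝ), Module.finrank ℝ W = d ∧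
      ∀ x ∈ W, x ≠ 0 → x ⬝ᵥ A.mulVec x < 0} q)
    (hq' : IsGreatest {d : ℕ | ∃ W : Submodule ℝ (Fin N → ℝ), W ≤ K ∧
      Module.finrank ℝ W = d ∧ ∀ x ∈ W, x ≠ 0 → x ⬝ᵥ B.mulVec x < 0} q')
    (hnd : ∀ x ∈ K, x ≠ 0 → ∃ y ∈ K, x ⬝ᵥ B.mulVec y ≠ 0) :
    ∃ ε₁ > (0 : ℝ), ∀ ε : ℝ, 0 < ε → ε < ε₁ →
      IsUnit ((1 / ε) • A + B) ∧
      IsGreatest {d : ℕ | ∃ W : Submodule ℝ (Fin N → ℝ), Module.finrank ℝ W = d ∧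
        ∀ x ∈ W, x ≠ 0 → x ⬝ᵥ ((1 / ε) • A + B).mulVec x < 0} (q + q') := by
  have hα := isSymm_toBilin'_iff_isSymm.mpr hA
  have hβ := isSymm_toBilin'_iff_isSymm.mpr hB
  have hKα : LinearMap.ker (toBilin' A) = K := (ker_toBilin'_of_isSymm hA).trans hK.symm
  have hqα : IsGreatest (negDefFinranks (toBilin' A) ⊤) q := by
    simpa [negDefFinranks_toBilin'] using hq
  have hqβ : IsGreatest (negDefFinranks (toBilin' B) (LinearMap.ker (toBilin' A))) q' := by
    rwa [hKα, negDefFinranks_toBilin']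
  have hndβ : LinearMap.ker (toBilin' A) ⊓ (toBilin' B).orthogonal (LinearMap.ker (toBilin' A))
      = ⊥ := by
    rw [hKα, Submodule.eq_bot_iff]
    rintro x ⟨hxK, hxK'⟩
    by_contra hx0
    obtain ⟨y, hyK, hxy⟩ := hnd x hxK hx0
    exact hxy (by rw [← toBilin'_apply', hβ.eq]; exact hxK' y hyK)
  obtain ⟨ε₁, hε₁, hsub⟩ := mem_nhdsGT_iff_exists_Ioo_subset.mp <|
    tendsto_inv_nhdsGT_zero.eventually
      (eventually_nondegenerate_and_isGreatest_negDefFinranks hα hβ hqα hqβ hndβ)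
  refine ⟨ε₁, hε₁, fun ε hε hεε₁ ↦ ?_⟩
  obtain ⟨hnondeg, hmax⟩ := hsub ⟨hε, hεε₁⟩
  rw [← one_div, ← map_smul, ← map_add] at hnondeg hmax
  rw [negDefFinranks_toBilin'] at hmax
  rw [isUnit_iff_isUnit_det, isUnit_iff_ne_zero, ← nondegenerate_toBilin'_iff_det_ne_zero]
  exact ⟨hnondeg, by simpa only [le_top, true_and, exists_true_left] using hmax⟩

/-- Spectral perturbation lemma behind the index computation: if `A`, `B` are
real symmetric `N × N` matrices, `q` is the negative index of `A`, `q'` is the negative index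
of `B` restricted to `K = ker A`, and `B` is nondegenerate on `K`, then for all sufficiently
small `ε > 0` the matrix `(1/ε)A + B` is invertible with negative index `q + q'`. -/
theorem index_of_perturbed_quadratic_form
    (N : ℕ) (hN : 1 ≤ N) (A B : Matrix (Fin N) (Fin N) ℝ)
    (hA : A.IsSymm) (hB : B.IsSymm)
    (K : Submodule ℝ (Fin N → ℝ)) (hK : K = LinearMap.ker A.mulVecLin)
    (q q' : ℕ)
    (hq : IsGreatest {d : ℕ | ∃ W : Submodule ℝ (Fin N → ℝ), Module.finrank ℝ W = d ∧
      ∀ x ∈ W, x ≠ 0 → x ⬝ᵥ A.mulVec x < 0} q)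
    (hq' : IsGreatest {d : ℕ | ∃ W : Submodule ℝ (Fin N → ℝ), W ≤ K ∧
      Module.finrank ℝ W = d ∧ ∀ x ∈ W, x ≠ 0 → x ⬝ᵥ B.mulVec x < 0} q')
    (hnd : ∀ x ∈ K, x ≠ 0 → ∃ y ∈ K, x ⬝ᵥ B.mulVec y ≠ 0) :
    ∃ ε₁ > (0 : ℝ), ∀ ε : ℝ, 0 < ε → ε < ε₁ →
      IsUnit ((1 / ε) • A + B) ∧
      IsGreatest {d : ℕ | ∃ W : Submodule ℝ (Fin N → ℝ), Module.finrank ℝ W = d ∧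
        ∀ x ∈ W, x ≠ 0 → x ⬝ᵥ ((1 / ε) • A + B).mulVec x < 0} (q + q') :=
  index_of_perturbed_quadratic_form_general N A B hA hB K hK q q' hq hq' hnd
end

section
/- Let ε ∈ ℝ, ε ≠ 0, and define u : {(z₀, z₁) ∈ ℂ × ℂ : z₀z₁ + ε ≠ 0} → ℝ by u(z₀, z₁) = −log|z₀z₁ + ε|². Then u is smooth (C^∞) on this open set, and for every (z₀, z₁) in it, writing f = z₀z₁ + ε, the second Fréchet derivative of u satisfies: D²u(z₀, z₁)((1, 0), (0, 1)) = −2·Re(ε/f²) and D²u(z₀, z₁)((i, 0), (0, i)) = 2·Re(ε/f²). In particular, at (z₀, z₁) = (0, 0) these equal −2/ε and 2/ε respectively. -/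
open Complex ContinuousLinearMap

noncomputable def Bmap (ε : ℝ) (q : ℂ × ℂ) : (ℂ × ℂ) →L[ℝ] ℂ :=
  q.1 • ContinuousLinearMap.snd ℝ ℂ ℂ + q.2 • ContinuousLinearMap.fst ℝ ℂ ℂ

lemma hasFDerivAt_f (ε : ℝ) (q : ℂ × ℂ) :
    HasFDerivAt (fun p : ℂ × ℂ => p.1 * p.2 + (ε : ℂ)) (Bmap ε q) q := by
  simpa [Bmap] using ((hasFDerivAt_fst (𝕜 := ℝ) (p := q)).mul
    (hasFDerivAt_snd (𝕜 := ℝ) (p := q))).add_const (ε : ℂ)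

noncomputable def Nmap (w : ℂ) : ℂ →L[ℝ] ℝ :=
  (w.re • Complex.reCLM + w.re • Complex.reCLM) + (w.im • Complex.imCLM + w.im • Complex.imCLM)

lemma hasFDerivAt_normSq' (w : ℂ) : HasFDerivAt Complex.normSq (Nmap w) w := by
  have h : HasFDerivAt (fun z : ℂ => z.re * z.re + z.im * z.im) (Nmap w) w := by
    exact (Complex.reCLM.hasFDerivAt.mul Complex.reCLM.hasFDerivAt).add
      (Complex.imCLM.hasFDerivAt.mul Complex.imCLM.hasFDerivAt)
  have e : (⇑Complex.normSq : ℂ → ℝ) = fun z : ℂ => z.re * z.re + z.im * z.im :=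
    funext Complex.normSq_apply
  rw [e]; exact h

noncomputable def Fmap (ε : ℝ) (q : ℂ × ℂ) : (ℂ × ℂ) →L[ℝ] ℝ :=
  (-2 : ℝ) • (Complex.reCLM.comp (((q.1 * q.2 + (ε : ℂ))⁻¹ : ℂ) • Bmap ε q))

lemma hasFDerivAt_u (ε : ℝ) (q : ℂ × ℂ) (hq : q.1 * q.2 + (ε : ℂ) ≠ 0) :
    HasFDerivAt (fun p : ℂ × ℂ => -Real.log (Complex.normSq (p.1 * p.2 + (ε : ℂ))))
      (Fmap ε q) q := by
  set f : ℂ := q.1 * q.2 + (ε : ℂ) with hf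
  have hns : Complex.normSq f ≠ 0 := fun h => hq (Complex.normSq_eq_zero.1 h)
  have h1 : HasFDerivAt (fun p : ℂ × ℂ => Real.log (Complex.normSq (p.1 * p.2 + (ε : ℂ))))
      ((Complex.normSq f)⁻¹ • ((Nmap f).comp (Bmap ε q))) q := by
    exact (Real.hasDerivAt_log hns).comp_hasFDerivAt q
      ((hasFDerivAt_normSq' f).comp q (hasFDerivAt_f ε q))
  have h2 := h1.neg
  refine h2.congr_fderiv (Eq.symm ?_)
  refine ContinuousLinearMap.ext fun v => ?_
  have : Complex.normSq f = f.re * f.re + f.im * f.im := Complex.normSq_apply f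
  simp only [Fmap, Nmap, Bmap, ContinuousLinearMap.neg_apply, ContinuousLinearMap.smul_apply,
    ContinuousLinearMap.comp_apply, ContinuousLinearMap.add_apply, Complex.reCLM_apply,
    Complex.imCLM_apply, smul_eq_mul, Complex.mul_re, Complex.inv_re, Complex.inv_im, ← hf]
  field_simp
  ring

lemma contDiffAt_u (ε : ℝ) (p : ℂ × ℂ) (hp : p.1 * p.2 + (ε : ℂ) ≠ 0) :
    ContDiffAt ℝ (⊤ : ℕ∞) (fun p : ℂ × ℂ => -Real.log (Complex.normSq (p.1 * p.2 + (ε : ℂ)))) p := by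
  have hns : Complex.normSq (p.1 * p.2 + (ε : ℂ)) ≠ 0 :=
    fun h => hp (Complex.normSq_eq_zero.1 h)
  have h1 : ContDiff ℝ (⊤ : ℕ∞) (fun p : ℂ × ℂ => p.1 * p.2 + (ε : ℂ)) :=
    (contDiff_fst.mul contDiff_snd).add contDiff_const
  have h2 : ContDiff ℝ (⊤ : ℕ∞) Complex.normSq := by
    have h : (Complex.normSq : ℂ → ℝ) = fun z => z.re * z.re + z.im * z.im :=
      funext fun z => Complex.normSq_apply z
    rw [h]
    exact (Complex.reCLM.contDiff.mul Complex.reCLM.contDiff).add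
      (Complex.imCLM.contDiff.mul Complex.imCLM.contDiff)
  exact ((Real.contDiffAt_log.2 hns).comp p ((h2.comp h1).contDiffAt)).neg

lemma second_eval (ε : ℝ) (p : ℂ × ℂ) (hp : p.1 * p.2 + (ε : ℂ) ≠ 0) (v w : ℂ × ℂ)
    (D : (ℂ × ℂ) →L[ℝ] ℝ) (hD : HasFDerivAt (fun q => Fmap ε q v) D p) :
    fderiv ℝ (fderiv ℝ (fun p : ℂ × ℂ => -Real.log (Complex.normSq (p.1 * p.2 + (ε : ℂ)))))
      p w v = D w := by
  set u : ℂ × ℂ → ℝ := fun p => -Real.log (Complex.normSq (p.1 * p.2 + (ε : ℂ))) with hu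
  have hdiff : DifferentiableAt ℝ (fderiv ℝ u) p :=
    ((contDiffAt_u ε p hp).fderiv_right (m := 1) (by exact WithTop.coe_le_coe.2 le_top)).differentiableAt one_ne_zero
  have hS : IsOpen {q : ℂ × ℂ | q.1 * q.2 + (ε : ℂ) ≠ 0} := by
    have : Continuous (fun q : ℂ × ℂ => q.1 * q.2 + (ε : ℂ)) :=
      (continuous_fst.mul continuous_snd).add continuous_const
    exact isOpen_compl_singleton.preimage this
  have hmem : {q : ℂ × ℂ | q.1 * q.2 + (ε : ℂ) ≠ 0} ∈ nhds p := hS.mem_nhds hp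
  have hEq : (fun q => fderiv ℝ u q v) =ᶠ[nhds p] (fun q => Fmap ε q v) :=
    Filter.eventuallyEq_of_mem hmem (fun q hq => by rw [(hasFDerivAt_u ε q hq).fderiv])
  have h3 : fderiv ℝ (fun q => fderiv ℝ u q v) p = D := by
    rw [hEq.fderiv_eq, hD.fderiv]
  have h4 := fderiv_clm_apply hdiff (differentiableAt_const v)
  simp only [fderiv_fun_const, Pi.zero_apply, ContinuousLinearMap.comp_zero, zero_add] at h4
  have : fderiv ℝ (fderiv ℝ u) p w v = (fderiv ℝ (fderiv ℝ u) p).flip v w := rfl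
  rw [this, ← h4, h3]

lemma dir1 (ε : ℝ) (p : ℂ × ℂ) (hp : p.1 * p.2 + (ε : ℂ) ≠ 0) :
    ∃ D : (ℂ × ℂ) →L[ℝ] ℝ, HasFDerivAt (fun q => Fmap ε q ((0 : ℂ), (1 : ℂ))) D p ∧
      D ((1 : ℂ), (0 : ℂ)) = -2 * (((ε : ℂ) / (p.1 * p.2 + (ε : ℂ)) ^ 2).re) := by
  set f : ℂ := p.1 * p.2 + (ε : ℂ) with hf
  have hinv : HasFDerivAt (fun q : ℂ × ℂ => (q.1 * q.2 + (ε : ℂ))⁻¹)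
      ((-ContinuousLinearMap.mulLeftRight ℝ ℂ f⁻¹ f⁻¹).comp (Bmap ε p)) p :=
    (hasFDerivAt_inv' hp).comp p (hasFDerivAt_f ε p)
  have hm : HasFDerivAt (fun q : ℂ × ℂ => (q.1 * q.2 + (ε : ℂ))⁻¹ * q.1)
      (f⁻¹ • ContinuousLinearMap.fst ℝ ℂ ℂ +
        p.1 • ((-ContinuousLinearMap.mulLeftRight ℝ ℂ f⁻¹ f⁻¹).comp (Bmap ε p))) p :=
    hinv.mul hasFDerivAt_fst
  have hre := (Complex.reCLM.hasFDerivAt.comp p hm).const_mul (-2 : ℝ)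
  refine ⟨(-2 : ℝ) • Complex.reCLM.comp (f⁻¹ • ContinuousLinearMap.fst ℝ ℂ ℂ +
      p.1 • ((-ContinuousLinearMap.mulLeftRight ℝ ℂ f⁻¹ f⁻¹).comp (Bmap ε p))), ?_, ?_⟩
  · refine hre.congr_of_eventuallyEq (Filter.Eventually.of_forall fun q => ?_)
    simp [Fmap, Bmap]
  · simp only [ContinuousLinearMap.smul_apply, ContinuousLinearMap.coe_comp',
      Function.comp_apply, Complex.reCLM_apply, smul_eq_mul]
    congr 1
    congr 1
    simp only [ContinuousLinearMap.add_apply, ContinuousLinearMap.smul_apply,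
      ContinuousLinearMap.coe_comp', Function.comp_apply, ContinuousLinearMap.neg_apply,
      ContinuousLinearMap.mulLeftRight_apply, ContinuousLinearMap.coe_fst', Bmap,
      ContinuousLinearMap.coe_snd', smul_eq_mul]
    field_simp
    ring

lemma dir2 (ε : ℝ) (p : ℂ × ℂ) (hp : p.1 * p.2 + (ε : ℂ) ≠ 0) :
    ∃ D : (ℂ × ℂ) →L[ℝ] ℝ, HasFDerivAt (fun q => Fmap ε q ((0 : ℂ), (Complex.I : ℂ))) D p ∧
      D ((Complex.I : ℂ), (0 : ℂ)) = 2 * (((ε : ℂ) / (p.1 * p.2 + (ε : ℂ)) ^ 2).re) := by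
  set f : ℂ := p.1 * p.2 + (ε : ℂ) with hf
  have hinv : HasFDerivAt (fun q : ℂ × ℂ => (q.1 * q.2 + (ε : ℂ))⁻¹)
      ((-ContinuousLinearMap.mulLeftRight ℝ ℂ f⁻¹ f⁻¹).comp (Bmap ε p)) p :=
    (hasFDerivAt_inv' hp).comp p (hasFDerivAt_f ε p)
  have hc : HasFDerivAt (fun q : ℂ × ℂ => q.1 * Complex.I)
      (p.1 • (0 : (ℂ × ℂ) →L[ℝ] ℂ) + Complex.I • ContinuousLinearMap.fst ℝ ℂ ℂ) p :=
    hasFDerivAt_fst.mul (hasFDerivAt_const Complex.I p)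
  have hm : HasFDerivAt (fun q : ℂ × ℂ => (q.1 * q.2 + (ε : ℂ))⁻¹ * (q.1 * Complex.I))
      (f⁻¹ • (p.1 • (0 : (ℂ × ℂ) →L[ℝ] ℂ) + Complex.I • ContinuousLinearMap.fst ℝ ℂ ℂ) +
        (p.1 * Complex.I) •
          ((-ContinuousLinearMap.mulLeftRight ℝ ℂ f⁻¹ f⁻¹).comp (Bmap ε p))) p :=
    hinv.mul hc
  have hre := (Complex.reCLM.hasFDerivAt.comp p hm).const_mul (-2 : ℝ)
  refine ⟨(-2 : ℝ) • Complex.reCLM.comp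
      (f⁻¹ • (p.1 • (0 : (ℂ × ℂ) →L[ℝ] ℂ) + Complex.I • ContinuousLinearMap.fst ℝ ℂ ℂ) +
        (p.1 * Complex.I) •
          ((-ContinuousLinearMap.mulLeftRight ℝ ℂ f⁻¹ f⁻¹).comp (Bmap ε p))), ?_, ?_⟩
  · refine hre.congr_of_eventuallyEq (Filter.Eventually.of_forall fun q => ?_)
    simp [Fmap, Bmap]
  · have hval : f⁻¹ * (p.1 * 0 + Complex.I * Complex.I) +
        (p.1 * Complex.I) * -(f⁻¹ * (p.1 * (0 : ℂ) + p.2 * Complex.I) * f⁻¹) =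
        -((ε : ℂ) / f ^ 2) := by
      field_simp
      ring_nf
      rw [Complex.I_sq]
      ring
    simp only [ContinuousLinearMap.smul_apply, ContinuousLinearMap.coe_comp',
      Function.comp_apply, Complex.reCLM_apply, smul_eq_mul,
      ContinuousLinearMap.add_apply, ContinuousLinearMap.zero_apply,
      ContinuousLinearMap.neg_apply, ContinuousLinearMap.mulLeftRight_apply,
      ContinuousLinearMap.coe_fst', Bmap, ContinuousLinearMap.coe_snd']
    rw [hval]
    simp [Complex.neg_re]

/-- For `u(z₀,z₁) = -log|z₀z₁ + ε|²`, the function is smooth away from the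
zero set of `z₀z₁ + ε`, and the mixed second derivatives in the directions
`((1,0),(0,1))` and `((i,0),(0,i))` equal `-2 Re(ε/f²)` and `2 Re(ε/f²)` respectively, where
`f = z₀z₁ + ε`; at the origin these are `-2/ε` and `2/ε`. -/
theorem mixed_second_derivatives_blow_up (ε : ℝ) (hε : ε ≠ 0) :
    ContDiffOn ℝ (⊤ : ℕ∞) (fun p : ℂ × ℂ => -Real.log (Complex.normSq (p.1 * p.2 + (ε : ℂ))))
      {p : ℂ × ℂ | p.1 * p.2 + (ε : ℂ) ≠ 0} ∧
    (∀ p : ℂ × ℂ, p.1 * p.2 + (ε : ℂ) ≠ 0 →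
      fderiv ℝ (fderiv ℝ (fun p : ℂ × ℂ => -Real.log (Complex.normSq (p.1 * p.2 + (ε : ℂ)))))
          p ((1 : ℂ), (0 : ℂ)) ((0 : ℂ), (1 : ℂ)) =
        -2 * (((ε : ℂ) / (p.1 * p.2 + (ε : ℂ)) ^ 2).re) ∧
      fderiv ℝ (fderiv ℝ (fun p : ℂ × ℂ => -Real.log (Complex.normSq (p.1 * p.2 + (ε : ℂ)))))
          p ((Complex.I : ℂ), (0 : ℂ)) ((0 : ℂ), (Complex.I : ℂ)) =
        2 * (((ε : ℂ) / (p.1 * p.2 + (ε : ℂ)) ^ 2).re)) ∧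
    fderiv ℝ (fderiv ℝ (fun p : ℂ × ℂ => -Real.log (Complex.normSq (p.1 * p.2 + (ε : ℂ)))))
        ((0 : ℂ), (0 : ℂ)) ((1 : ℂ), (0 : ℂ)) ((0 : ℂ), (1 : ℂ)) = -2 / ε ∧
    fderiv ℝ (fderiv ℝ (fun p : ℂ × ℂ => -Real.log (Complex.normSq (p.1 * p.2 + (ε : ℂ)))))
        ((0 : ℂ), (0 : ℂ)) ((Complex.I : ℂ), (0 : ℂ)) ((0 : ℂ), (Complex.I : ℂ)) = 2 / ε := by
  have part2 : ∀ p : ℂ × ℂ, p.1 * p.2 + (ε : ℂ) ≠ 0 →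
      fderiv ℝ (fderiv ℝ (fun p : ℂ × ℂ => -Real.log (Complex.normSq (p.1 * p.2 + (ε : ℂ)))))
          p ((1 : ℂ), (0 : ℂ)) ((0 : ℂ), (1 : ℂ)) =
        -2 * (((ε : ℂ) / (p.1 * p.2 + (ε : ℂ)) ^ 2).re) ∧
      fderiv ℝ (fderiv ℝ (fun p : ℂ × ℂ => -Real.log (Complex.normSq (p.1 * p.2 + (ε : ℂ)))))
          p ((Complex.I : ℂ), (0 : ℂ)) ((0 : ℂ), (Complex.I : ℂ)) =
        2 * (((ε : ℂ) / (p.1 * p.2 + (ε : ℂ)) ^ 2).re) := by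
    intro p hp
    obtain ⟨D1, hD1, hv1⟩ := dir1 ε p hp
    obtain ⟨D2, hD2, hv2⟩ := dir2 ε p hp
    exact ⟨(second_eval ε p hp _ _ D1 hD1).trans hv1,
      (second_eval ε p hp _ _ D2 hD2).trans hv2⟩
  have hp0 : (((0 : ℂ), (0 : ℂ)) : ℂ × ℂ).1 * (((0 : ℂ), (0 : ℂ)) : ℂ × ℂ).2 + (ε : ℂ) ≠ 0 := by
    simpa using Complex.ofReal_ne_zero.2 hε
  have hval0 : (((ε : ℂ)) / ((((0 : ℂ), (0 : ℂ)) : ℂ × ℂ).1 *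
      (((0 : ℂ), (0 : ℂ)) : ℂ × ℂ).2 + (ε : ℂ)) ^ 2).re = 1 / ε := by
    have h : ((ε : ℂ)) / (((0 : ℂ) * (0 : ℂ)) + (ε : ℂ)) ^ 2 = ((1 / ε : ℝ) : ℂ) := by
      push_cast
      rw [zero_mul, zero_add]
      field_simp [Complex.ofReal_ne_zero.2 hε]
    simpa using congrArg Complex.re h
  refine ⟨fun p hp => (contDiffAt_u ε p hp).contDiffWithinAt, part2, ?_, ?_⟩
  · rw [(part2 _ hp0).1, hval0]
    ring
  · rw [(part2 _ hp0).2, hval0]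
    ring
end

section
/- Let k ≥ 0 and let ψ : ℝ^k → ℝ be continuously differentiable. Define φ on the open set {(z₀, z₁, x) ∈ ℂ × ℂ × ℝ^k : z₀z₁ + 1 ≠ 0} by φ(z₀, z₁, x) = −log|z₀z₁ + 1|² + |z₀|² + |z₁|² + ψ(x). Then the Fréchet derivative of φ vanishes at (z₀, z₁, x) if and only if the Fréchet derivative of ψ vanishes at x and either z₀ = z₁ = 0, or (z₁ = −conj(z₀) and |z₀|² = 2). In particular, every critical point of φ with |z₀z₁| < 2 satisfies z₀ = z₁ = 0 and has x a critical point of ψ. -/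
/-- The plurisubharmonic local model `φ(z₀,z₁,x) = -log|z₀z₁+1|² + |z₀|² + |z₁|² + ψ(x)`. -/
noncomputable def psiModel {k : ℕ} (ψ : EuclideanSpace ℝ (Fin k) → ℝ)
    (p : ℂ × ℂ × EuclideanSpace ℝ (Fin k)) : ℝ :=
  -Real.log (Complex.normSq (p.1 * p.2.1 + 1)) + Complex.normSq p.1 +
    Complex.normSq p.2.1 + ψ p.2.2

/-!
Write `g = z₀z₁ + 1`. Since `d|w|² = 2⟪w, ·⟫` and `d log|w|² = 2⟪(conj w)⁻¹, ·⟫`, the derivative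
of `φ` at `(z₀, z₁, x)` is `(h₀, h₁, v) ↦ 2⟪z₀ - conj z₁ / conj g, h₀⟫ + 2⟪z₁ - conj z₀ / conj g, h₁⟫
+ dψ(v)`, so `φ` is critical exactly when `dψ(x) = 0` and `conj z₀ · g = z₁`, `conj z₁ · g = z₀`.
Multiplying the first equation by `z₀` gives `g (1 - |z₀|²) = 1`, so `g` is real, while taking norms
in both gives `|g| = 1` unless `z₀ = z₁ = 0`. Hence `(1 - |z₀|²)² = 1`, i.e. `|z₀|² = 2`, `g = -1`
and `z₁ = -conj z₀`; on this branch `|z₀z₁| = 2`.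
-/

open Complex ContinuousLinearMap
open scoped RealInnerProductSpace ComplexConjugate

theorem ContinuousLinearMap.coprod_eq_zero_iff {R M M₁ M₂ : Type*} [Semiring R]
    [TopologicalSpace M] [TopologicalSpace M₁] [TopologicalSpace M₂]
    [AddCommMonoid M] [Module R M] [ContinuousAdd M] [AddCommMonoid M₁] [Module R M₁]
    [AddCommMonoid M₂] [Module R M₂] {f₁ : M₁ →L[R] M} {f₂ : M₂ →L[R] M} :
    f₁.coprod f₂ = 0 ↔ f₁ = 0 ∧ f₂ = 0 := by
  refine ⟨fun h => ⟨?_, ?_⟩, fun ⟨h₁, h₂⟩ => ?_⟩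
  · rw [← coprod_comp_inl f₁ f₂, h, zero_comp]
  · rw [← coprod_comp_inr f₁ f₂, h, zero_comp]
  · ext <;> simp [h₁, h₂]

theorem two_smul_innerSL_eq_zero_iff {E : Type*} [NormedAddCommGroup E] [InnerProductSpace ℝ E]
    {c : E} : 2 • innerSL ℝ c = 0 ↔ c = 0 := by
  refine ⟨fun h => ?_, fun h => by simp [h]⟩
  simpa using congr($h c)

namespace Complex

theorem real_inner_mul_right (a c h : ℂ) : ⟪c, a * h⟫ = ⟪conj a * c, h⟫ := by
  simp only [Complex.inner, map_mul, conj_conj]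
  ring_nf

theorem hasFDerivAt_normSq (w : ℂ) : HasFDerivAt normSq (2 • innerSL ℝ w) w := by
  have : (normSq : ℂ → ℝ) = fun w => ‖w‖ ^ 2 := funext fun w => (Complex.sq_norm w).symm
  exact this ▸ (hasStrictFDerivAt_norm_sq w).hasFDerivAt

theorem hasFDerivAt_log_normSq {g : ℂ} (hg : g ≠ 0) :
    HasFDerivAt (fun w => Real.log (normSq w)) (2 • innerSL ℝ (conj g)⁻¹) g := by
  have hN : normSq g ≠ 0 := normSq_eq_zero.not.mpr hg
  refine ((Real.hasDerivAt_log hN).comp_hasFDerivAt g (hasFDerivAt_normSq g)).congr_fderiv ?_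
  rw [inv_def, conj_conj, normSq_conj, smul_comm, ← map_smul, real_smul, mul_comm]

theorem sub_conj_mul_inv_conj_eq_zero_iff {a b g : ℂ} (hg : g ≠ 0) :
    a - conj b * (conj g)⁻¹ = 0 ↔ conj a * g = b := by
  rw [sub_eq_zero, ← (starRingEnd ℂ).injective.eq_iff, map_mul, map_inv₀, conj_conj, conj_conj,
    eq_mul_inv_iff_mul_eq₀ hg]

theorem conj_mul_eq_and_conj_mul_eq_iff {z₀ z₁ : ℂ} :
    (conj z₀ * (z₀ * z₁ + 1) = z₁ ∧ conj z₁ * (z₀ * z₁ + 1) = z₀) ↔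
      (z₀ = 0 ∧ z₁ = 0) ∨ (z₁ = -conj z₀ ∧ normSq z₀ = 2) := by
  constructor
  · rintro ⟨e₀, e₁⟩
    by_cases hz₀ : z₀ = 0
    · exact .inl ⟨hz₀, by simpa [hz₀] using e₀.symm⟩
    right
    have hreal : (z₀ * z₁ + 1) * (1 - (normSq z₀ : ℂ)) = 1 := by
      linear_combination -(z₀ * e₀) + (z₀ * z₁ + 1) * mul_conj z₀
    have hunit : normSq (z₀ * z₁ + 1) = 1 := by
      have h₀ := congrArg normSq e₀
      have h₁ := congrArg normSq e₁
      simp only [normSq_mul, normSq_conj] at h₀ h₁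
      have h : normSq z₀ * (normSq (z₀ * z₁ + 1) ^ 2 - 1) = 0 := by
        linear_combination normSq (z₀ * z₁ + 1) * h₀ + h₁
      have hsq := (mul_eq_zero.mp h).resolve_left (normSq_eq_zero.not.mpr hz₀)
      nlinarith [normSq_nonneg (z₀ * z₁ + 1)]
    have htwo : normSq z₀ = 2 := by
      have h := congrArg normSq hreal
      have hnormSq_one_sub : normSq (1 - (normSq z₀ : ℂ)) = (1 - normSq z₀) * (1 - normSq z₀) := by
        rw [← ofReal_one, ← ofReal_sub, normSq_ofReal]
      rw [normSq_mul, hunit, hnormSq_one_sub, normSq_one] at h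
      have hpos : 0 < normSq z₀ := normSq_pos.mpr hz₀
      nlinarith
    refine ⟨?_, htwo⟩
    rw [htwo] at hreal
    push_cast at hreal
    linear_combination -e₀ - conj z₀ * hreal
  · rintro (⟨rfl, rfl⟩ | ⟨rfl, htwo⟩)
    · simp
    have hg : z₀ * -conj z₀ + 1 = -1 := by
      rw [mul_neg, mul_conj, htwo]
      norm_num
    rw [hg]
    exact ⟨by ring, by simp⟩

end Complex

theorem hasFDerivAt_psiModel {k : ℕ} {ψ : EuclideanSpace ℝ (Fin k) → ℝ} {z₀ z₁ : ℂ}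
    {x : EuclideanSpace ℝ (Fin k)} (hψ : DifferentiableAt ℝ ψ x) (hne : z₀ * z₁ + 1 ≠ 0) :
    HasFDerivAt (psiModel ψ)
      ((2 • innerSL ℝ (z₀ - conj z₁ * (conj (z₀ * z₁ + 1))⁻¹)).coprod
        ((2 • innerSL ℝ (z₁ - conj z₀ * (conj (z₀ * z₁ + 1))⁻¹)).coprod (fderiv ℝ ψ x)))
      (z₀, z₁, x) := by
  set P : ℂ × ℂ × EuclideanSpace ℝ (Fin k) := (z₀, z₁, x)
  have hfst := hasFDerivAt_fst (𝕜 := ℝ) (p := P)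
  have hsnd := hasFDerivAt_snd (𝕜 := ℝ) (p := P)
  have hg := (hfst.mul hsnd.fst).add_const (1 : ℂ)
  have h := ((((hasFDerivAt_log_normSq hne).comp P hg).neg.add
    ((hasFDerivAt_normSq z₀).comp P hfst)).add ((hasFDerivAt_normSq z₁).comp P hsnd.fst)).add
    (hψ.hasFDerivAt.comp P hsnd.snd)
  refine h.congr_fderiv (ContinuousLinearMap.ext fun ⟨h₀, h₁, v⟩ => ?_)
  simp only [coprod_apply, add_apply, neg_apply, comp_apply, smul_apply, coe_innerSL_apply,
    coe_fst', coe_snd', smul_eq_mul, inner_add_right, inner_sub_left, real_inner_mul_right]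
  ring

/-- Critical points of the local model
`φ = -log|z₀z₁+1|² + |z₀|² + |z₁|² + ψ(x)`: the derivative of `φ` vanishes at `(z₀,z₁,x)`
iff `x` is a critical point of `ψ` and either `z₀ = z₁ = 0` or (`z₁ = -conj z₀` and
`|z₀|² = 2`); in particular every critical point with `|z₀z₁| < 2` has `z₀ = z₁ = 0`. -/
theorem critical_points_of_plurisubharmonic_model
    (k : ℕ) (ψ : EuclideanSpace ℝ (Fin k) → ℝ) (hψ : ContDiff ℝ 1 ψ)
    (z₀ z₁ : ℂ) (x : EuclideanSpace ℝ (Fin k)) (hne : z₀ * z₁ + 1 ≠ 0) :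
    (fderiv ℝ (psiModel ψ) (z₀, z₁, x) = 0 ↔
      (fderiv ℝ ψ x = 0 ∧
        ((z₀ = 0 ∧ z₁ = 0) ∨
          (z₁ = -(starRingEnd ℂ) z₀ ∧ Complex.normSq z₀ = 2)))) ∧
    (‖z₀ * z₁‖ < 2 → fderiv ℝ (psiModel ψ) (z₀, z₁, x) = 0 →
      z₀ = 0 ∧ z₁ = 0 ∧ fderiv ℝ ψ x = 0) := by
  have hcrit : fderiv ℝ (psiModel ψ) (z₀, z₁, x) = 0 ↔ fderiv ℝ ψ x = 0 ∧
      ((z₀ = 0 ∧ z₁ = 0) ∨ (z₁ = -conj z₀ ∧ normSq z₀ = 2)) := by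
    rw [(hasFDerivAt_psiModel (hψ.differentiable one_ne_zero x) hne).fderiv, coprod_eq_zero_iff,
      coprod_eq_zero_iff, two_smul_innerSL_eq_zero_iff, two_smul_innerSL_eq_zero_iff,
      sub_conj_mul_inv_conj_eq_zero_iff hne, sub_conj_mul_inv_conj_eq_zero_iff hne,
      ← conj_mul_eq_and_conj_mul_eq_iff]
    tauto
  refine ⟨hcrit, fun hlt h => ?_⟩
  obtain ⟨hψx, ⟨rfl, rfl⟩ | ⟨rfl, htwo⟩⟩ := hcrit.mp h
  · exact ⟨rfl, rfl, hψx⟩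
  · rw [mul_neg, norm_neg, mul_conj, norm_real, Real.norm_of_nonneg (normSq_nonneg z₀), htwo] at hlt
    exact (lt_irrefl 2 hlt).elim
end
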